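/- Let w ∈ L_n, m ∈ {1,…,n−1} and k ≥ 0, and let F_n^min(w,m) be the set of ≼-minimal elements of {σ_1,…,σ_m} ∪ F_n^min(w) (a finite set). Suppose D assigns to every subset S ⊆ F_n^min(w,m) an element D(S) ∈ B_n^+ that is a least common right-multiple of S (i.e., every element of S left-divides D(S), and D(S) left-divides every common right-multiple of S; in particular D(∅) = 1). Then x_{n,k}(w,m) = Σ_{S ⊆ F_n^min(w,m)} (−1)^{|S|} · x_{n, k−|w|−|D(S)|}, where the sum ranges over all subsets S of F_n^min(w,m) and |S| is the cardinality of S. -/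

import Mathlib

/-!
Common setup: the positive braid monoid `B_n^+` on `n` strands, presented by the
Artin generators `σ_1, …, σ_{n-1}` (1-based indexing) with the braid relations;
lex-representatives, forbidden prefixes, admissible functions, etc.
-/

namespace BraidPaper

/-- Words in the Artin generators: the free monoid on `n - 1` letters. -/
abbrev Word (n : ℕ) := FreeMonoid (Fin (n - 1))

/-- The generator `σ_i` (`1 ≤ i ≤ n - 1`, 1-based) as a one-letter word;
the empty word for out-of-range indices. -/
def sigma (n : ℕ) (i : ℕ) : Word n :=
  if h : 1 ≤ i ∧ i ≤ n - 1 then FreeMonoid.of (⟨i - 1, by omega⟩ : Fin (n - 1)) else 1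

/-- The braid relations. -/
inductive BraidRel (n : ℕ) : Word n → Word n → Prop
  | comm : ∀ i j : ℕ, 1 ≤ i → i ≤ n - 1 → 1 ≤ j → j ≤ n - 1 → (i + 2 ≤ j ∨ j + 2 ≤ i) →
      BraidRel n (sigma n i * sigma n j) (sigma n j * sigma n i)
  | braid : ∀ i : ℕ, 1 ≤ i → i + 1 ≤ n - 1 →
      BraidRel n (sigma n i * sigma n (i + 1) * sigma n i)
        (sigma n (i + 1) * sigma n i * sigma n (i + 1))

/-- The congruence generated by the braid relations. -/
def braidCon (n : ℕ) : Con (Word n) := conGen (BraidRel n)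

/-- The positive braid monoid `B_n^+`. -/
abbrev PB (n : ℕ) := (braidCon n).Quotient

/-- The canonical projection `b : A_n^* → B_n^+`. -/
def pr (n : ℕ) : Word n →* PB n := (braidCon n).mk'

/-- The length homomorphism on words (with values in `Multiplicative ℕ`). -/
def lenHom (n : ℕ) : Word n →* Multiplicative ℕ :=
  FreeMonoid.lift fun _ => Multiplicative.ofAdd 1

lemma lenHom_sigma (n t : ℕ) (h1 : 1 ≤ t) (h2 : t ≤ n - 1) :
    lenHom n (sigma n t) = Multiplicative.ofAdd 1 := by
  rw [sigma, dif_pos ⟨h1, h2⟩]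
  exact FreeMonoid.lift_eval_of _ _

lemma braidCon_le_ker (n : ℕ) : braidCon n ≤ Con.ker (lenHom n) := by
  refine Con.conGen_le.mpr ?_
  intro x y h
  rw [Con.ker_rel]
  cases h with
  | comm i j hi hi' hj hj' hij =>
      rw [map_mul, map_mul, mul_comm]
  | braid i hi hi' =>
      rw [map_mul, map_mul, map_mul, map_mul,
        lenHom_sigma n i hi (by omega), lenHom_sigma n (i + 1) (by omega) hi']

/-- The (well-defined) length of a positive braid. -/
def len (n : ℕ) (x : PB n) : ℕ :=
  Multiplicative.toAdd (Con.lift _ (lenHom n) (braidCon_le_ker n) x)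

/-- The length of a word. -/
def wlen {n : ℕ} (w : Word n) : ℕ := (FreeMonoid.toList w).length

/-- Strict lexicographic order on words, induced by `σ_1 < σ_2 < ⋯ < σ_{n-1}`. -/
def lexLt {n : ℕ} (u v : Word n) : Prop :=
  List.Lex (· < ·) (FreeMonoid.toList u) (FreeMonoid.toList v)

/-- `L_n`: the set of lex-representatives, i.e. words that are `≤_lex`-minimal among
all words representing the same element of `B_n^+` (all of which have equal length). -/
def Ln (n : ℕ) : Set (Word n) :=
  {w | ∀ v : Word n, pr n v = pr n w → ¬ lexLt v w}

open Classical in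
/-- `ω(β)`: the lex-representative of a positive braid `β`. -/
noncomputable def omegaRep (n : ℕ) (β : PB n) : Word n :=
  if h : ∃ w : Word n, pr n w = β ∧ w ∈ Ln n then h.choose else 1

/-- `F_n(w)`: the set of forbidden prefixes after `w`. -/
def Fset (n : ℕ) (w : Word n) : Set (PB n) :=
  {α | w * omegaRep n α ∉ Ln n}

/-- Left-divisibility `a ≼ b` in `B_n^+`. -/
def ldvd (n : ℕ) (a b : PB n) : Prop := ∃ c : PB n, a * c = b

/-- The set of `≼`-minimal elements of a subset of `B_n^+`. -/
def minimals (n : ℕ) (S : Set (PB n)) : Set (PB n) :=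
  {a | a ∈ S ∧ ∀ b ∈ S, ldvd n b a → b = a}

/-- `F_n^min(w)`: the set of minimal forbidden prefixes after `w`. -/
def Fmin (n : ℕ) (w : Word n) : Set (PB n) := minimals n (Fset n w)

/-- `d` is a least common right-multiple of the set `S`. -/
def IsLcm (n : ℕ) (S : Set (PB n)) (d : PB n) : Prop :=
  (∀ a ∈ S, ldvd n a d) ∧ ∀ e : PB n, (∀ a ∈ S, ldvd n a e) → ldvd n d e

/-- The descending product `σ_a σ_{a-1} ⋯ σ_b` (empty if `b > a`). -/
def prodDesc (n a b : ℕ) : Word n :=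
  (((List.range' b (a + 1 - b)).reverse).map (sigma n)).prod

/-- The ascending product `σ_a σ_{a+1} ⋯ σ_b` (empty if `a > b`). -/
def prodAsc (n a b : ℕ) : Word n :=
  ((List.range' a (b + 1 - a)).map (sigma n)).prod

/-- Admissible functions `f : {1,…,n-1} → {-1,0,1,…,n-1}`. -/
def Admissible (n : ℕ) (f : ℕ → ℤ) : Prop :=
  (∀ i : ℕ, 1 ≤ i → i ≤ n - 1 → -1 ≤ f i ∧ f i ≤ (i : ℤ)) ∧ f 1 ≠ -1

/-- The set `F_f ⊆ B_n^+` associated to an admissible function `f`: the elements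
`σ_i σ_{i-1} ⋯ σ_{f(i)}` for `i` with `1 ≤ f(i) ≤ i`, together with the elements
`σ_{i-1} σ_i` for `i` with `f(i) = -1`. -/
def Ff (n : ℕ) (f : ℕ → ℤ) : Set (PB n) :=
  {x | ∃ i : ℕ, 1 ≤ i ∧ i ≤ n - 1 ∧ 1 ≤ f i ∧ f i ≤ (i : ℤ) ∧
        x = pr n (prodDesc n i (f i).toNat)} ∪
  {x | ∃ i : ℕ, 1 ≤ i ∧ i ≤ n - 1 ∧ f i = -1 ∧ x = pr n (sigma n (i - 1) * sigma n i)}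

/-- `F_n^min(w, m)`: the set of `≼`-minimal elements of `{σ_1,…,σ_m} ∪ F_n^min(w)`. -/
def FminM (n : ℕ) (w : Word n) (m : ℕ) : Set (PB n) :=
  minimals n ({x | ∃ i : ℕ, 1 ≤ i ∧ i ≤ m ∧ x = pr n (sigma n i)} ∪ Fmin n w)

/-- `x_{n,j}` (for `j : ℤ`): the number of elements of `B_n^+` of length `j`
(`0` for negative `j`). -/
noncomputable def xcount (n : ℕ) (j : ℤ) : ℕ :=
  Nat.card {x : PB n // (len n x : ℤ) = j}

/-- `x_{n,k}(w,m)`: the number of words in `L_n` of length `k` of the form `w·w'`,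
where `w'` does not begin with any of `σ_1, …, σ_m`. -/
noncomputable def xwm (n k : ℕ) (w : Word n) (m : ℕ) : ℕ :=
  Nat.card {v : Word n // wlen v = k ∧ v ∈ Ln n ∧
    ∃ w' : Word n, v = w * w' ∧
      ∀ i : ℕ, 1 ≤ i → i ≤ m → ¬ ∃ u : Word n, w' = sigma n i * u}


/-!
Stripping off `w` identifies the words counted by `x_{n,k}(w,m)` with the braids `α` of length
`k - |w|` that no element of `F_n^min(w,m)` left-divides. Indeed `w·ω(α)` is a lex-representative
iff no forbidden prefix divides `α`, because `F_n(w)` is closed under right multiplication; and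
`ω(α)` does not begin with `σ_1, …, σ_m` iff no such `σ_i` divides `α`, because a lex-minimal word
begins with the smallest letter it can. Inclusion–exclusion over `F_n^min(w,m)` counts these
braids: those divisible by every element of `S` are the right multiples `D(S)·γ`, and by left
cancellation there are `x_{n, k-|w|-|D(S)|}` of them.

Left cancellation is Garside's theorem: if `a x = b y` for generators `a` and `b`, then `x` and `y`
are the cofactors of the least common multiple of `a` and `b` times a common `z`. This is proved
by induction on the length, following a chain of braid relations from `a x` to `b y` and checking,
for each relation applied at the head, the cube condition on three generators.
-/

open FreeMonoid Relation

variable {n : ℕ} {a b c : Fin (n - 1)}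

lemma exists_val_add_one_eq {i : ℕ} (h1 : 1 ≤ i) (h2 : i ≤ n - 1) :
    ∃ a : Fin (n - 1), a.val + 1 = i :=
  ⟨⟨i - 1, by omega⟩, by simp only; omega⟩

lemma sigma_val_succ (a : Fin (n - 1)) : sigma n (a.val + 1) = of a := by
  rw [sigma, dif_pos ⟨Nat.le_add_left _ _, by omega⟩]
  rfl

lemma wlen_eq_length (u : Word n) : wlen u = u.length := rfl

lemma wlen_mul (u v : Word n) : wlen (u * v) = wlen u + wlen v := length_mul u v

lemma len_pr (u : Word n) : len n (pr n u) = wlen u := by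
  simp [len, pr, lenHom, lift_apply, wlen, List.prod_replicate]

lemma len_mul (x y : PB n) : len n (x * y) = len n x + len n y := by
  rw [len, len, len, map_mul, toAdd_mul]

lemma pr_surjective : Function.Surjective (pr n) := Con.mk'_surjective

lemma eq_one_of_len_eq_zero {x : PB n} (h : len n x = 0) : x = 1 := by
  obtain ⟨u, rfl⟩ := pr_surjective x
  rw [len_pr, wlen_eq_length, length_eq_zero] at h
  rw [h, map_one]

/-! ### Braid relations as a rewriting system -/

def Adjacent (a b : Fin (n - 1)) : Prop := b.val = a.val + 1 ∨ a.val = b.val + 1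

def Distant (a b : Fin (n - 1)) : Prop := a.val + 2 ≤ b.val ∨ b.val + 2 ≤ a.val

instance (a b : Fin (n - 1)) : Decidable (Adjacent a b) := inferInstanceAs (Decidable (_ ∨ _))

lemma Adjacent.symm (h : Adjacent a b) : Adjacent b a := Or.symm h

lemma Distant.symm (h : Distant a b) : Distant b a := Or.symm h

lemma Adjacent.ne (h : Adjacent a b) : a ≠ b := by
  rintro rfl; rcases h with h | h <;> omega

lemma Distant.ne (h : Distant a b) : a ≠ b := by
  rintro rfl; rcases h with h | h <;> omega

lemma Distant.not_adjacent (h : Distant a b) : ¬ Adjacent a b := by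
  unfold Adjacent; unfold Distant at h; omega

lemma adjacent_or_distant (h : a ≠ b) : Adjacent a b ∨ Distant a b := by
  have := Fin.val_ne_of_ne h; unfold Adjacent Distant; omega

lemma Adjacent.distant_of_adjacent (hca : Adjacent c a) (hcb : Adjacent c b) (hab : a ≠ b) :
    Distant a b := by
  have := Fin.val_ne_of_ne hab; unfold Adjacent at hca hcb; unfold Distant; omega

/-- `a · complement a b = b · complement b a` is the least common right multiple of `a`, `b`. -/
def complement (a b : Fin (n - 1)) : List (Fin (n - 1)) :=
  if a = b then [] else if Adjacent a b then [b, a] else [b]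

@[simp] lemma complement_self (a : Fin (n - 1)) : complement a a = [] := if_pos rfl

lemma Adjacent.complement_eq (h : Adjacent a b) : complement a b = [b, a] := by
  rw [complement, if_neg h.ne, if_pos h]

lemma Distant.complement_eq (h : Distant a b) : complement a b = [b] := by
  rw [complement, if_neg h.ne, if_neg h.not_adjacent]

lemma length_complement_comm (a b : Fin (n - 1)) :
    (complement a b).length = (complement b a).length := by
  rcases eq_or_ne a b with rfl | hab
  · rfl
  rcases adjacent_or_distant hab with h | h
  · rw [h.complement_eq, h.symm.complement_eq]; rfl
  · rw [h.complement_eq, h.symm.complement_eq]; rfl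

def Step (n : ℕ) (u v : Word n) : Prop :=
  ∃ (p q : Word n) (a c : Fin (n - 1)),
    u = p * ofList (a :: complement a c) * q ∧ v = p * ofList (c :: complement c a) * q

lemma Step.symm {u v : Word n} (h : Step n u v) : Step n v u := by
  obtain ⟨p, q, a, c, hu, hv⟩ := h
  exact ⟨p, q, c, a, hv, hu⟩

instance : Std.Symm (Step n) := ⟨fun _ _ => Step.symm⟩

lemma Step.mul_left {u v : Word n} (w : Word n) (h : Step n u v) : Step n (w * u) (w * v) := by
  obtain ⟨p, q, a, c, rfl, rfl⟩ := h
  exact ⟨w * p, q, a, c, by simp only [mul_assoc], by simp only [mul_assoc]⟩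

lemma Step.mul_right {u v : Word n} (w : Word n) (h : Step n u v) : Step n (u * w) (v * w) := by
  obtain ⟨p, q, a, c, rfl, rfl⟩ := h
  exact ⟨p, q * w, a, c, by simp only [mul_assoc], by simp only [mul_assoc]⟩

def stepCon (n : ℕ) : Con (Word n) where
  r := ReflTransGen (Step n)
  iseqv := ⟨fun _ => .refl, Std.Symm.symm _ _, .trans⟩
  mul' {_ x y _} h₁ h₂ :=
    (h₁.lift (· * y) fun _ _ => Step.mul_right y).trans
      (h₂.lift (x * ·) fun _ _ => Step.mul_left x)

lemma step_of_braidRel {u v : Word n} (h : BraidRel n u v) : Step n u v := by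
  cases h with
  | comm i j hi hi' hj hj' hij =>
      obtain ⟨a, rfl⟩ := exists_val_add_one_eq hi hi'
      obtain ⟨c, rfl⟩ := exists_val_add_one_eq hj hj'
      have had : Distant a c := by unfold Distant; omega
      refine ⟨1, 1, a, c, ?_, ?_⟩ <;>
        simp [sigma_val_succ, had.complement_eq, had.symm.complement_eq, ofList_cons]
  | braid i hi hi' =>
      obtain ⟨a, rfl⟩ := exists_val_add_one_eq (n := n) hi (by omega)
      obtain ⟨c, hc⟩ := exists_val_add_one_eq (n := n) (i := a.val + 1 + 1) (by omega) hi'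
      have had : Adjacent a c := by unfold Adjacent; omega
      refine ⟨1, 1, a, c, ?_, ?_⟩ <;>
        simp [← hc, sigma_val_succ, had.complement_eq, had.symm.complement_eq, ofList_cons,
          mul_assoc]

lemma braidCon_complement (a c : Fin (n - 1)) :
    braidCon n (ofList (a :: complement a c)) (ofList (c :: complement c a)) := by
  rcases eq_or_ne a c with rfl | hac
  · exact (braidCon n).refl _
  rcases adjacent_or_distant hac with h | h
  · wlog hc : c.val = a.val + 1 generalizing a c
    · exact (braidCon n).symm (this c a hac.symm h.symm (h.resolve_left hc))
    have hrel : braidCon n _ _ :=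
      ConGen.Rel.of _ _ (BraidRel.braid (n := n) (a.val + 1) (by omega) (by omega))
    rw [sigma_val_succ a, ← hc, sigma_val_succ] at hrel
    simpa [h.complement_eq, h.symm.complement_eq, ofList_cons, mul_assoc] using hrel
  · have hrel : braidCon n _ _ := ConGen.Rel.of _ _ (BraidRel.comm (n := n) (a.val + 1)
      (c.val + 1) (by omega) (by omega) (by omega) (by omega) (by unfold Distant at h; omega))
    rw [sigma_val_succ, sigma_val_succ] at hrel
    simpa [h.complement_eq, h.symm.complement_eq, ofList_cons] using hrel

lemma braidCon_of_step {u v : Word n} (h : Step n u v) : braidCon n u v := by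
  obtain ⟨p, q, a, c, rfl, rfl⟩ := h
  exact (braidCon n).mul ((braidCon n).mul ((braidCon n).refl p) (braidCon_complement a c))
    ((braidCon n).refl q)

lemma pr_eq_iff_reflTransGen {u v : Word n} : pr n u = pr n v ↔ ReflTransGen (Step n) u v := by
  refine (Con.eq _).trans ⟨fun h => ?_, fun h => ?_⟩
  · exact (Con.conGen_le (c := stepCon n)).2 (fun x y hxy => .single (step_of_braidRel hxy)) h
  · induction h with
    | refl => exact (braidCon n).refl _
    | tail _ hs ih => exact (braidCon n).trans ih (braidCon_of_step hs)

/-! ### Garside's theorem: left cancellation -/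

def gen (a : Fin (n - 1)) : PB n := pr n (of a)

def prList (l : List (Fin (n - 1))) : PB n := pr n (ofList l)

@[simp] lemma prList_nil : prList ([] : List (Fin (n - 1))) = 1 := map_one _

@[simp] lemma prList_cons (a : Fin (n - 1)) (l : List (Fin (n - 1))) :
    prList (a :: l) = gen a * prList l := by
  rw [prList, ofList_cons, map_mul]; rfl

@[simp] lemma prList_append (l₁ l₂ : List (Fin (n - 1))) :
    prList (l₁ ++ l₂) = prList l₁ * prList l₂ := by
  rw [prList, ofList_append, map_mul]; rfl

lemma prList_toList (u : Word n) : prList (toList u) = pr n u := by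
  rw [prList, ofList_toList]

lemma len_prList (l : List (Fin (n - 1))) : len n (prList l) = l.length := len_pr _

@[simp] lemma len_gen (a : Fin (n - 1)) : len n (gen a) = 1 := len_pr _

lemma length_eq_of_prList_eq {l₁ l₂ : List (Fin (n - 1))} (h : prList l₁ = prList l₂) :
    l₁.length = l₂.length := by
  simpa only [len_prList] using congrArg (len n) h

lemma gen_mul_prList_complement (a c : Fin (n - 1)) :
    gen a * prList (complement a c) = gen c * prList (complement c a) := by
  have h : prList (a :: complement a c) = prList (c :: complement c a) :=
    (Con.eq _).2 (braidCon_complement a c)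
  simpa only [prList_cons] using h

lemma Adjacent.prList_complement (h : Adjacent a b) :
    prList (complement a b) = gen b * gen a := by
  simp [h.complement_eq]

lemma Distant.prList_complement (h : Distant a b) :
    prList (complement a b) = gen b := by
  simp [h.complement_eq]

lemma Distant.gen_comm (h : Distant a b) (t : PB n) :
    gen a * (gen b * t) = gen b * (gen a * t) := by
  have := gen_mul_prList_complement a b
  rw [h.prList_complement, h.symm.prList_complement] at this
  rw [← mul_assoc, this, mul_assoc]

lemma Adjacent.gen_braid (h : Adjacent a b) (t : PB n) :
    gen a * (gen b * (gen a * t)) = gen b * (gen a * (gen b * t)) := by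
  have := gen_mul_prList_complement a b
  rw [h.prList_complement, h.symm.prList_complement] at this
  simp only [← mul_assoc] at this ⊢
  rw [this]

lemma gen_mul_prList_complement_comm (hca : Distant c a)
    (hcb : Distant c b) (t : PB n) :
    gen c * (prList (complement a b) * t) = prList (complement a b) * (gen c * t) := by
  rcases eq_or_ne a b with rfl | hab
  · simp
  rcases adjacent_or_distant hab with h | h
  · rw [h.prList_complement, mul_assoc, hcb.gen_comm, hca.gen_comm, mul_assoc]
  · rw [h.prList_complement, hcb.gen_comm]

/-- `gen a * x = gen b * y` factors through the least common multiple of `gen a` and `gen b`. -/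
def Resolves (a b : Fin (n - 1)) (x y : PB n) : Prop :=
  ∃ z, x = prList (complement a b) * z ∧ y = prList (complement b a) * z

lemma Resolves.symm {x y : PB n} (h : Resolves a b x y) : Resolves b a y x :=
  let ⟨z, hx, hy⟩ := h; ⟨z, hy, hx⟩

lemma resolves_self_iff {x y : PB n} : Resolves a a x y ↔ x = y := by
  simp [Resolves, eq_comm]

lemma Adjacent.resolves_iff (h : Adjacent a b) {x y : PB n} :
    Resolves a b x y ↔ ∃ z, x = gen b * (gen a * z) ∧ y = gen a * (gen b * z) := by
  simp only [Resolves, h.prList_complement, h.symm.prList_complement, mul_assoc]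

lemma Distant.resolves_iff (h : Distant a b) {x y : PB n} :
    Resolves a b x y ↔ ∃ z, x = gen b * z ∧ y = gen a * z := by
  simp only [Resolves, h.prList_complement, h.symm.prList_complement]

/-- Garside's lemma for tails of length less than `ℓ`. -/
def GarsideBelow (n ℓ : ℕ) : Prop :=
  ∀ (a b : Fin (n - 1)) (x y : PB n), len n x < ℓ → gen a * x = gen b * y → Resolves a b x y

variable {ℓ : ℕ}

lemma GarsideBelow.cancel (h : GarsideBelow n ℓ) {x y : PB n}
    (hx : len n x < ℓ) (e : gen a * x = gen a * y) : x = y :=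
  resolves_self_iff.1 (h a a x y hx e)

variable {x₀ y : PB n}

lemma GarsideBelow.resolves_of_distant_distant (hkey : GarsideBelow n ℓ)
    (hℓ : len n x₀ + 1 ≤ ℓ) (hca : Distant c a) (hcb : Distant c b)
    (h : Resolves c b (gen a * x₀) y) : Resolves a b (gen c * x₀) y := by
  obtain ⟨z₁, hx, rfl⟩ := hcb.resolves_iff.1 h
  obtain ⟨z₂, rfl, rfl⟩ := hkey a b x₀ z₁ (by omega) hx
  exact ⟨gen c * z₂, gen_mul_prList_complement_comm hca hcb z₂,
    gen_mul_prList_complement_comm hcb hca z₂⟩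

lemma GarsideBelow.resolves_of_adjacent_adjacent (hkey : GarsideBelow n ℓ)
    (hℓ : len n x₀ + 2 ≤ ℓ) (hca : Adjacent c a) (hcb : Adjacent c b)
    (h : Resolves c b (gen a * (gen c * x₀)) y) : Resolves a b (gen c * (gen a * x₀)) y := by
  obtain ⟨z₁, hx, rfl⟩ := hcb.resolves_iff.1 h
  rcases eq_or_ne a b with rfl | hab
  · obtain rfl := hkey.cancel (by omega) (hkey.cancel (by simp only [len_mul, len_gen]; omega) hx)
    exact resolves_self_iff.2 rfl
  have hab' := hca.distant_of_adjacent hcb hab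
  obtain ⟨z₂, h₁, h₂⟩ :=
    hab'.resolves_iff.1 (hkey a b _ _ (by simp only [len_mul, len_gen]; omega) hx)
  obtain ⟨z₃, rfl, rfl⟩ := hcb.resolves_iff.1 (hkey c b _ _ (by omega) h₁)
  simp only [len_mul, len_gen] at hℓ
  obtain ⟨z₄, rfl, h₄⟩ :=
    hca.resolves_iff.1 (hkey a c _ _ (by simp only [len_mul, len_gen]; omega) h₂.symm).symm
  obtain ⟨z₅, rfl, rfl⟩ :=
    hab'.symm.resolves_iff.1
      (hkey b a _ _ (by omega) (hkey.cancel (by simp only [len_mul, len_gen]; omega) h₄))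
  refine hab'.resolves_iff.2 ⟨gen c * (gen b * (gen a * (gen c * z₅))), ?_, ?_⟩
  · rw [hab'.gen_comm, hcb.symm.gen_braid, hca.gen_braid]
  · rw [hab'.symm.gen_comm (gen c * z₅), hca.symm.gen_braid, hcb.gen_braid, hab'.symm.gen_comm]

lemma GarsideBelow.resolves_of_adjacent_distant (hkey : GarsideBelow n ℓ)
    (hℓ : len n x₀ + 2 ≤ ℓ) (hca : Adjacent c a) (hcb : Distant c b)
    (h : Resolves c b (gen a * (gen c * x₀)) y) : Resolves a b (gen c * (gen a * x₀)) y := by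
  obtain ⟨z₁, hx, rfl⟩ := hcb.resolves_iff.1 h
  have hab : a ≠ b := by rintro rfl; exact hcb.not_adjacent hca
  have h₁ := hkey a b _ _ (by simp only [len_mul, len_gen]; omega) hx
  rcases adjacent_or_distant hab with hab' | hab'
  · obtain ⟨z₂, h₂, rfl⟩ := hab'.resolves_iff.1 h₁
    obtain ⟨z₃, rfl, h₃⟩ := hcb.resolves_iff.1 (hkey c b _ _ (by omega) h₂)
    simp only [len_mul, len_gen] at hℓ
    obtain ⟨z₄, rfl, rfl⟩ := hca.resolves_iff.1 (hkey c a _ _ (by omega) h₃.symm)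
    refine hab'.resolves_iff.2 ⟨gen c * (gen a * (gen b * z₄)), ?_, ?_⟩
    · rw [hab'.gen_braid, hcb.gen_comm, hcb.symm.gen_comm z₄, hca.gen_braid]
    · rw [hcb.symm.gen_comm (gen a * z₄), hca.gen_braid, hab'.gen_braid, hcb.gen_comm]
  · obtain ⟨z₂, h₂, rfl⟩ := hab'.resolves_iff.1 h₁
    obtain ⟨z₃, rfl, rfl⟩ := hcb.resolves_iff.1 (hkey c b _ _ (by omega) h₂)
    refine hab'.resolves_iff.2 ⟨gen c * (gen a * z₃), ?_, ?_⟩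
    · rw [hab'.gen_comm, hcb.gen_comm]
    · exact hca.gen_braid z₃

lemma GarsideBelow.resolves_of_distant_adjacent (hkey : GarsideBelow n ℓ)
    (hℓ : len n x₀ + 1 ≤ ℓ) (hca : Distant c a) (hcb : Adjacent c b)
    (h : Resolves c b (gen a * x₀) y) : Resolves a b (gen c * x₀) y := by
  obtain ⟨z₁, hx, rfl⟩ := hcb.resolves_iff.1 h
  have hab : a ≠ b := by rintro rfl; exact hca.not_adjacent hcb
  have h₁ := hkey a b _ _ (by omega) hx
  rcases adjacent_or_distant hab with hab' | hab'
  · obtain ⟨z₂, rfl, h₂⟩ := hab'.resolves_iff.1 h₁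
    simp only [len_mul, len_gen] at hℓ
    obtain ⟨z₃, h₃, rfl⟩ :=
      hca.symm.resolves_iff.1 (hkey a c _ _ (by simp only [len_mul, len_gen]; omega) h₂.symm)
    obtain ⟨z₄, rfl, rfl⟩ := hcb.symm.resolves_iff.1 (hkey b c _ _ (by omega) h₃)
    refine hab'.resolves_iff.2 ⟨gen c * (gen b * (gen a * z₄)), ?_, ?_⟩
    · rw [hca.symm.gen_comm (gen b * z₄), hcb.gen_braid, hab'.symm.gen_braid, hca.gen_comm]
    · rw [hab'.symm.gen_braid, hca.gen_comm, hca.symm.gen_comm z₄, hcb.gen_braid]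
  · obtain ⟨z₂, rfl, h₂⟩ := hab'.resolves_iff.1 h₁
    simp only [len_mul, len_gen] at hℓ
    obtain ⟨z₃, rfl, rfl⟩ := hca.symm.resolves_iff.1 (hkey a c _ _ (by omega) h₂.symm)
    refine hab'.resolves_iff.2 ⟨gen c * (gen b * z₃), ?_, ?_⟩
    · exact hcb.gen_braid z₃
    · rw [hab'.symm.gen_comm, hca.gen_comm]

/-- The cube condition: Garside's lemma survives one braid relation applied at the head of
`a x`. -/
lemma GarsideBelow.resolves_cube (hkey : GarsideBelow n ℓ)
    (hℓ : len n (prList (complement a c) * x₀) ≤ ℓ)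
    (h : Resolves c b (prList (complement c a) * x₀) y) :
    Resolves a b (prList (complement a c) * x₀) y := by
  rcases eq_or_ne a c with rfl | hac
  · simpa using h
  rcases eq_or_ne c b with rfl | hcb
  · exact ⟨x₀, rfl, (resolves_self_iff.1 h).symm⟩
  rcases adjacent_or_distant hac.symm with hca | hca <;>
    rcases adjacent_or_distant hcb with hcb | hcb <;>
    simp only [hca.prList_complement, hca.symm.prList_complement, mul_assoc, len_mul,
      len_gen] at h hℓ ⊢
  · exact hkey.resolves_of_adjacent_adjacent (by omega) hca hcb h
  · exact hkey.resolves_of_adjacent_distant (by omega) hca hcb h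
  · exact hkey.resolves_of_distant_adjacent (by omega) hca hcb h
  · exact hkey.resolves_of_distant_distant (by omega) hca hcb h

lemma Step.cases_cons {X : List (Fin (n - 1))} {v : Word n} (h : Step n (ofList (a :: X)) v) :
    (∃ X', Step n (ofList X) (ofList X') ∧ v = ofList (a :: X')) ∨
      ∃ c X₀, X = complement a c ++ X₀ ∧ v = ofList (c :: (complement c a ++ X₀)) := by
  obtain ⟨p, q, a', c, hu, rfl⟩ := h
  replace hu := congrArg toList hu
  simp only [toList_ofList, toList_mul] at hu
  cases hp : toList p with
  | nil =>
    rw [hp, List.nil_append, List.cons_append, List.cons.injEq] at hu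
    obtain ⟨rfl, rfl⟩ := hu
    refine .inr ⟨c, toList q, rfl, ?_⟩
    rw [← ofList_toList p, hp]
    rfl
  | cons x p' =>
    rw [hp, List.cons_append, List.cons_append, List.cons.injEq] at hu
    obtain ⟨rfl, rfl⟩ := hu
    refine .inl ⟨p' ++ (c :: complement c a') ++ toList q,
      ⟨ofList p', q, a', c, rfl, rfl⟩, ?_⟩
    rw [← ofList_toList p, hp]
    rfl

lemma GarsideBelow.resolves_of_reflTransGen (hkey : GarsideBelow n ℓ) {X Y : List (Fin (n - 1))}
    (h : ReflTransGen (Step n) (ofList (a :: X)) (ofList (b :: Y))) (hX : X.length ≤ ℓ) :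
    Resolves a b (prList X) (prList Y) := by
  generalize hu : ofList (a :: X) = u at h
  induction h using ReflTransGen.head_induction_on generalizing a X with
  | refl =>
    obtain ⟨rfl, rfl⟩ := List.cons.inj (ofList.injective hu)
    exact resolves_self_iff.2 rfl
  | head hstep _ ih =>
    subst hu
    rcases hstep.cases_cons with ⟨X', hX', rfl⟩ | ⟨c, X₀, rfl, rfl⟩
    · have hpr : prList X = prList X' := pr_eq_iff_reflTransGen.2 (.single hX')
      rw [hpr]
      exact ih (length_eq_of_prList_eq hpr ▸ hX) rfl
    · have := ih (by simpa [length_complement_comm] using hX) rfl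
      rw [prList_append] at this ⊢
      exact hkey.resolves_cube (by simpa [len_mul, len_prList] using hX) this

lemma garsideBelow (n ℓ : ℕ) : GarsideBelow n ℓ := by
  induction ℓ with
  | zero => intro a b x y hx; omega
  | succ ℓ ih =>
    intro a b x y hx hxy
    obtain ⟨u, rfl⟩ := pr_surjective x
    obtain ⟨v, rfl⟩ := pr_surjective y
    rw [← prList_toList u, ← prList_toList v] at hxy ⊢
    rw [← prList_toList u, len_prList] at hx
    rw [← prList_cons, ← prList_cons, prList, prList, pr_eq_iff_reflTransGen] at hxy
    exact ih.resolves_of_reflTransGen hxy (by omega)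

theorem resolves_of_gen_mul_eq {x y : PB n} (h : gen a * x = gen b * y) : Resolves a b x y :=
  garsideBelow n (len n x + 1) a b x y (by omega) h

lemma gen_mul_left_cancel {x y : PB n} (h : gen a * x = gen a * y) : x = y :=
  resolves_self_iff.1 (resolves_of_gen_mul_eq h)

instance : IsLeftCancelMul (PB n) where
  mul_left_cancel x := by
    obtain ⟨u, rfl⟩ := pr_surjective x
    induction u using FreeMonoid.inductionOn' with
    | one => intro y z h; simpa using h
    | of_mul a u ih =>
      intro y z h
      simp only [map_mul, mul_assoc] at h
      exact ih (gen_mul_left_cancel h)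

/-! ### Minimal divisors and lex-representatives -/

lemma ldvd_refl (x : PB n) : ldvd n x x := ⟨1, mul_one x⟩

lemma ldvd_trans {x y z : PB n} (h₁ : ldvd n x y) (h₂ : ldvd n y z) : ldvd n x z := by
  obtain ⟨c, rfl⟩ := h₁
  obtain ⟨d, rfl⟩ := h₂
  exact ⟨c * d, (mul_assoc _ _ _).symm⟩

lemma eq_of_ldvd_of_len_le {x y : PB n} (h : ldvd n x y) (hl : len n y ≤ len n x) : x = y := by
  obtain ⟨c, rfl⟩ := h
  rw [len_mul] at hl
  rw [eq_one_of_len_eq_zero (by omega : len n c = 0), mul_one]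

lemma exists_mem_minimals_ldvd {S : Set (PB n)} {α : PB n} (hα : α ∈ S) :
    ∃ d ∈ minimals n S, ldvd n d α := by
  obtain ⟨d, ⟨hdS, hdα⟩, hmin⟩ :=
    (measure (len n)).wf.has_min {b | b ∈ S ∧ ldvd n b α} ⟨α, hα, ldvd_refl α⟩
  exact ⟨d, ⟨hdS, fun b hbS hbd =>
    eq_of_ldvd_of_len_le hbd (not_lt.1 (hmin b ⟨hbS, ldvd_trans hbd hdα⟩))⟩, hdα⟩

lemma forall_minimals_not_ldvd_iff {S : Set (PB n)} {α : PB n} :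
    (∀ f ∈ minimals n S, ¬ ldvd n f α) ↔ ∀ f ∈ S, ¬ ldvd n f α :=
  ⟨fun h _ hf hfα =>
    let ⟨d, hd, hdf⟩ := exists_mem_minimals_ldvd hf; h d hd (ldvd_trans hdf hfα),
   fun h _ hf => h _ hf.1⟩

lemma lexLt_trichotomous (u v : Word n) : lexLt u v ∨ u = v ∨ lexLt v u := by
  rcases trichotomous_of (List.Lex (· < ·)) (toList u) (toList v) with h | h | h
  · exact .inl h
  · exact .inr (.inl (toList.injective h))
  · exact .inr (.inr h)

lemma eq_of_mem_Ln_of_pr_eq {u v : Word n} (hu : u ∈ Ln n) (hv : v ∈ Ln n)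
    (h : pr n u = pr n v) : u = v := by
  rcases lexLt_trichotomous u v with hl | he | hl
  · exact absurd hl (hv u h)
  · exact he
  · exact absurd hl (hu v h.symm)

lemma finite_setOf_wlen_eq (L : ℕ) : {u : Word n | wlen u = L}.Finite :=
  (List.finite_length_eq _ L).preimage toList.injective.injOn

lemma exists_pr_eq_mem_Ln (β : PB n) : ∃ u, pr n u = β ∧ u ∈ Ln n := by
  have hfin : {u : Word n | pr n u = β}.Finite :=
    (finite_setOf_wlen_eq (len n β)).subset fun u (hu : pr n u = β) =>
      show wlen u = len n β by rw [← len_pr, hu]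
  obtain ⟨u, hu, hmin⟩ := Set.exists_min_image _ toList hfin (pr_surjective β)
  exact ⟨u, hu, fun v hv hlt => (hmin v (hv.trans hu)).not_gt hlt⟩

lemma pr_omegaRep (β : PB n) : pr n (omegaRep n β) = β := by
  rw [omegaRep, dif_pos (exists_pr_eq_mem_Ln β)]
  exact (exists_pr_eq_mem_Ln β).choose_spec.1

lemma omegaRep_mem_Ln (β : PB n) : omegaRep n β ∈ Ln n := by
  rw [omegaRep, dif_pos (exists_pr_eq_mem_Ln β)]
  exact (exists_pr_eq_mem_Ln β).choose_spec.2

lemma omegaRep_pr {u : Word n} (hu : u ∈ Ln n) : omegaRep n (pr n u) = u :=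
  eq_of_mem_Ln_of_pr_eq (omegaRep_mem_Ln _) hu (pr_omegaRep _)

lemma wlen_omegaRep (β : PB n) : wlen (omegaRep n β) = len n β := by
  rw [← len_pr, pr_omegaRep]

lemma mem_Ln_of_mul_mem_Ln {w w' : Word n} (h : w * w' ∈ Ln n) : w' ∈ Ln n :=
  fun v hv hlt => h (w * v) (by rw [map_mul, map_mul, hv]) (List.Lex.append_left _ hlt _)

/-- In the second case `u` is smaller than `c` already within its first `|c|` letters. -/
lemma lex_append_cases {α : Type*} [LinearOrder α] :
    ∀ (c u t : List α), List.Lex (· < ·) u (c ++ t) → u.length = c.length + t.length →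
      (∃ u₂, u = c ++ u₂ ∧ List.Lex (· < ·) u₂ t) ∨
        ∀ s t' : List α, List.Lex (· < ·) (u ++ s) (c ++ t')
  | [], u, _, h, _ => .inl ⟨u, rfl, h⟩
  | _ :: _, [], _, _, hl => by simp only [List.length_nil, List.length_cons] at hl; omega
  | x :: c, y :: u, t, h, hl => by
    rw [List.cons_append] at h
    cases h with
    | cons h =>
      exact (lex_append_cases c u t h (by simp only [List.length_cons] at hl; omega)).imp
        (fun ⟨u₂, he, hlt⟩ => ⟨u₂, by rw [he, List.cons_append], hlt⟩)
        (fun hall s t' => .cons (hall s t'))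
    | rel h => exact .inr fun _ _ => .rel h

lemma mem_Fset_of_ldvd {w : Word n} {α δ : PB n} (hα : α ∈ Fset n w) (hd : ldvd n α δ) :
    δ ∈ Fset n w := by
  obtain ⟨γ, rfl⟩ := hd
  intro hαγ
  simp only [Fset, Set.mem_ofPred_eq, Ln, not_forall, not_not] at hα
  obtain ⟨v, hv, hlt⟩ := hα
  have hlen := congrArg (len n) hv
  rw [len_pr, len_pr, wlen_mul] at hlen
  rcases lex_append_cases (toList w) (toList v) (toList (omegaRep n α)) hlt hlen with
    ⟨u₂, he, hlt₂⟩ | hall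
  · refine omegaRep_mem_Ln α (ofList u₂) ?_ hlt₂
    apply mul_left_cancel (a := pr n w)
    rw [← map_mul, ← map_mul, ← hv, ← ofList_toList v, he, ofList_append, ofList_toList]
  · exact hαγ (v * omegaRep n γ) (by simp only [map_mul, hv, pr_omegaRep, mul_assoc])
      (hall _ _)

lemma exists_sigma_head_of_ldvd {i : ℕ} (h1 : 1 ≤ i) (h2 : i ≤ n - 1) {α : PB n}
    (hd : ldvd n (pr n (sigma n i)) α) :
    ∃ j, 1 ≤ j ∧ j ≤ i ∧ ∃ u, omegaRep n α = sigma n j * u := by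
  obtain ⟨γ, rfl⟩ := hd
  obtain ⟨a, rfl⟩ := exists_val_add_one_eq h1 h2
  rw [sigma_val_succ]
  have hmin := omegaRep_mem_Ln (pr n (of a) * γ) (of a * omegaRep n γ)
    (by rw [map_mul, pr_omegaRep, pr_omegaRep])
  have hlen := wlen_omegaRep (pr n (of a) * γ)
  rw [len_mul, len_pr] at hlen
  cases hω : toList (omegaRep n (pr n (of a) * γ)) with
  | nil =>
    simp only [wlen, hω, List.length_nil, toList_of, List.length_cons] at hlen
    omega
  | cons x t =>
    have hxa : ¬ a < x := fun hax => hmin (by rw [lexLt, hω]; exact .rel hax)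
    refine ⟨x.val + 1, by omega, by simp only [not_lt, Fin.le_def] at hxa; omega, ofList t, ?_⟩
    rw [sigma_val_succ, ← ofList_toList (omegaRep n _), hω]
    rfl

lemma forall_not_ldvd_sigma_iff {m : ℕ} (hm : m ≤ n - 1) {α : PB n} :
    (∀ f ∈ {x | ∃ i, 1 ≤ i ∧ i ≤ m ∧ x = pr n (sigma n i)}, ¬ ldvd n f α) ↔
      ∀ i, 1 ≤ i → i ≤ m → ¬ ∃ u, omegaRep n α = sigma n i * u := by
  constructor
  · rintro h i h1 h2 ⟨u, hu⟩
    exact h _ ⟨i, h1, h2, rfl⟩ ⟨pr n u, by rw [← map_mul, ← hu, pr_omegaRep]⟩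
  · rintro h _ ⟨i, h1, h2, rfl⟩ hd
    obtain ⟨j, hj1, hji, hu⟩ := exists_sigma_head_of_ldvd h1 (by omega) hd
    exact h j hj1 (by omega) hu

lemma forall_not_ldvd_Fset_iff {w : Word n} {α : PB n} :
    (∀ f ∈ Fset n w, ¬ ldvd n f α) ↔ w * omegaRep n α ∈ Ln n :=
  ⟨fun h => not_not.1 fun hα => h α hα (ldvd_refl α),
   fun hα _ hf hfα => mem_Fset_of_ldvd hf hfα hα⟩

lemma forall_not_ldvd_FminM_iff {m : ℕ} (hm : m ≤ n - 1) {w : Word n} {α : PB n} :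
    (∀ f ∈ FminM n w m, ¬ ldvd n f α) ↔
      w * omegaRep n α ∈ Ln n ∧
        ∀ i, 1 ≤ i → i ≤ m → ¬ ∃ u, omegaRep n α = sigma n i * u := by
  simp only [FminM, forall_minimals_not_ldvd_iff, Set.mem_union, or_imp, forall_and]
  rw [Fmin, forall_minimals_not_ldvd_iff, forall_not_ldvd_Fset_iff, forall_not_ldvd_sigma_iff hm,
    and_comm]

/-! ### Counting -/

abbrev OfLen (n : ℕ) (j : ℤ) := {x : PB n // (len n x : ℤ) = j}

instance (j : ℤ) : Finite (OfLen n j) :=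
  Set.Finite.to_subtype <| ((finite_setOf_wlen_eq j.toNat).image (pr n)).subset
    fun x (hx : (len n x : ℤ) = j) => by
      obtain ⟨u, rfl⟩ := pr_surjective x
      exact ⟨u, by rw [Set.mem_ofPred_eq, ← len_pr]; omega, rfl⟩

lemma natCard_ofLen_ldvd (d : PB n) (j : ℤ) :
    Nat.card {α : OfLen n j // ldvd n d α} = xcount n (j - len n d) := by
  refine (Nat.card_congr (Equiv.ofBijective
    (fun γ : OfLen n (j - len n d) =>
      ⟨⟨d * γ, by rw [len_mul]; push_cast; rw [γ.2]; ring⟩, γ, rfl⟩)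
    ⟨fun γ₁ γ₂ h => Subtype.ext (mul_left_cancel (congrArg (·.1.1) h)), ?_⟩)).symm
  rintro ⟨⟨α, hα⟩, γ, hγ⟩
  refine ⟨⟨γ, ?_⟩, Subtype.ext (Subtype.ext hγ)⟩
  have : len n (d * γ) = len n α := congrArg (len n) hγ
  rw [len_mul] at this
  omega

lemma natCard_ofLen_avoiding {F : Finset (PB n)} {D : Finset (PB n) → PB n}
    (hD : ∀ S ∈ F.powerset, IsLcm n (S : Set (PB n)) (D S)) (j : ℤ) :
    (Nat.card {α : OfLen n j // ∀ f ∈ F, ¬ ldvd n f α} : ℤ) =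
      ∑ S ∈ F.powerset, (-1 : ℤ) ^ S.card * (xcount n (j - len n (D S)) : ℤ) := by
  classical
  have := Fintype.ofFinite (OfLen n j)
  have hcard (p : OfLen n j → Prop) [DecidablePred p] :
      Nat.card {α // p α} = (Finset.univ.filter p).card := by
    rw [Nat.card_eq_fintype_card, Fintype.card_subtype]
  let M (f : PB n) : Finset (OfLen n j) := Finset.univ.filter fun α => ldvd n f α
  have hcompl : Finset.univ.filter (fun α : OfLen n j => ∀ f ∈ F, ¬ ldvd n f α) =
      F.inf fun f => (M f)ᶜ := by
    ext α; simp [M, Finset.mem_inf]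
  rw [hcard, hcompl, Finset.inclusion_exclusion_card_inf_compl]
  refine Finset.sum_congr rfl fun S hS => ?_
  have hlcm : S.inf M = Finset.univ.filter fun α : OfLen n j => ldvd n (D S) α := by
    ext α
    simp only [M, Finset.mem_inf, Finset.mem_filter_univ]
    exact ⟨fun h => (hD S hS).2 α h, fun h f hf => ldvd_trans ((hD S hS).1 f hf) h⟩
  rw [hlcm, ← hcard, natCard_ofLen_ldvd]

lemma xwm_eq_natCard {m : ℕ} (hm : m ≤ n - 1) {w : Word n} {F : Finset (PB n)}
    (hF : (F : Set (PB n)) = FminM n w m) (k : ℕ) :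
    xwm n k w m = Nat.card {α : OfLen n (k - wlen w) // ∀ f ∈ F, ¬ ldvd n f α} := by
  have hF' (α : PB n) : (∀ f ∈ F, ¬ ldvd n f α) ↔
      w * omegaRep n α ∈ Ln n ∧
        ∀ i, 1 ≤ i → i ≤ m → ¬ ∃ u, omegaRep n α = sigma n i * u := by
    rw [← forall_not_ldvd_FminM_iff hm, ← hF]
    rfl
  refine (Nat.card_congr (Equiv.ofBijective
    (fun α => ⟨w * omegaRep n α.1, ?wlen_eq, ((hF' α).1 α.2).1, _, rfl,
      ((hF' α).1 α.2).2⟩)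
    ⟨fun α β h => ?_, ?_⟩)).symm
  case wlen_eq =>
    rw [wlen_mul, wlen_omegaRep]
    have := α.1.2
    omega
  · have := congrArg (pr n) (congrArg Subtype.val h)
    simp only [map_mul, pr_omegaRep] at this
    exact Subtype.ext (Subtype.ext (mul_left_cancel this))
  · rintro ⟨_, hk, hv, w', rfl, hhead⟩
    have hw' := mem_Ln_of_mul_mem_Ln hv
    refine ⟨⟨⟨pr n w', ?_⟩, (hF' _).2 ⟨?_, ?_⟩⟩, ?_⟩
    · rw [wlen_mul] at hk
      rw [len_pr]
      omega
    · rwa [omegaRep_pr hw']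
    · rwa [omegaRep_pr hw']
    · simp only [omegaRep_pr hw']

theorem statement_18_general (n : ℕ) (w : Word n)
    (m : ℕ) (hm' : m ≤ n - 1) (k : ℕ)
    (F : Finset (PB n)) (hF : (F : Set (PB n)) = FminM n w m)
    (D : Finset (PB n) → PB n)
    (hD : ∀ S ∈ F.powerset, IsLcm n (S : Set (PB n)) (D S)) :
    (xwm n k w m : ℤ) =
      ∑ S ∈ F.powerset, (-1 : ℤ) ^ S.card *
        (xcount n ((k : ℤ) - (wlen w : ℤ) - (len n (D S) : ℤ)) : ℤ) := by
  rw [xwm_eq_natCard hm' hF, natCard_ofLen_avoiding hD]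

/-- the inclusion-exclusion formula
`x_{n,k}(w,m) = Σ_{S ⊆ F_n^min(w,m)} (-1)^|S| · x_{n, k - |w| - |∨S|}`. -/
theorem statement_18 (n : ℕ) (hn : 2 ≤ n) (w : Word n) (hw : w ∈ Ln n)
    (m : ℕ) (hm : 1 ≤ m) (hm' : m ≤ n - 1) (k : ℕ)
    (F : Finset (PB n)) (hF : (F : Set (PB n)) = FminM n w m)
    (D : Finset (PB n) → PB n)
    (hD : ∀ S ∈ F.powerset, IsLcm n (S : Set (PB n)) (D S)) :
    (xwm n k w m : ℤ) =
      ∑ S ∈ F.powerset, (-1 : ℤ) ^ S.card *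
        (xcount n ((k : ℤ) - (wlen w : ℤ) - (len n (D S) : ℤ)) : ℤ) :=
  statement_18_general n w m hm' k F hF D hD

end BraidPaper
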